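/- Let 1 ≤ a ≤ n, u_1,...,u_n variables, Q(z) = ∏_{|I|=a} (1 - z u_I), and P(z) = Q(z) ∑_{k≥0} s_{k^a} z^k. Then the leading coefficient of P, i.e. the coefficient of z^{(n choose a) - n}, equals (-1)^{(n choose a) + a(n-a) - 1} (u_1 ⋯ u_n)^{(n-1 choose a-1) - a}. -/

import Mathlib

/-- The alternant `a_μ = det(u_i^{μ_j})` in `n` variables. -/
noncomputable def alternant (n : ℕ) (μ : Fin n → ℕ) : MvPolynomial (Fin n) ℚ :=
  Matrix.det (Matrix.of fun i j => MvPolynomial.X i ^ μ j)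

/-!
Work in the fraction field, where `a_{k^a+δ}` makes sense for every `k ∈ ℤ`. Expanding the
determinant, `k ↦ a_{k^a+δ}` is a linear combination of the sequences `k ↦ u_I^k` with `|I| = a`,
so it satisfies the linear recurrence with characteristic polynomial `Q`:
`∑_m q_m a_{(k-m)^a+δ} = 0` for all `k ∈ ℤ`. Taking `k = N = (n choose a) - n`, the coefficient of
`z^N` in `Q · ∑_k a_{k^a+δ} z^k` is `-∑_{N<m≤(n choose a)} q_m a_{(N-m)^a+δ}`. For `-n < k < 0` two
exponents of `a_{k^a+δ}` coincide, so only `m = (n choose a)` survives. There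
`q_m = (-1)^(n choose a) (u_1⋯u_n)^(n-1 choose a-1)`, while `(u_1⋯u_n)^a a_{(-n)^a+δ}` is `a_δ`
with its columns rotated by `a`, a permutation of sign `(-1)^(a(n-a))`.
-/

open Finset Matrix Polynomial Equiv

theorem Nat.le_choose_sub_one {n a : ℕ} (ha : 0 < a) (hlt : a < n) :
    a ≤ (n - 1).choose (a - 1) := by
  obtain ⟨b, rfl⟩ : ∃ b, a = b + 1 := ⟨a - 1, by omega⟩
  calc b + 1 = (b + 1).choose b := (Nat.choose_succ_self_right b).symm
    _ ≤ (n - 1).choose (b + 1 - 1) := Nat.choose_le_choose b (by omega)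

theorem Nat.le_choose_of_pos_of_lt {n a : ℕ} (ha : 0 < a) (hlt : a < n) : n ≤ n.choose a := by
  have hD := Nat.le_choose_sub_one ha hlt
  obtain ⟨m, rfl⟩ : ∃ m, n = m + 1 := ⟨n - 1, by omega⟩
  obtain ⟨b, rfl⟩ : ∃ b, a = b + 1 := ⟨a - 1, by omega⟩
  have h := Nat.add_one_mul_choose_eq m b
  simp only [Nat.add_sub_cancel] at hD
  nlinarith

theorem Equiv.Perm.sign_finCycle {n : ℕ} (k : Fin n) :
    Perm.sign (finCycle k) = (-1) ^ ((n - 1) * k) := by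
  have h : finCycle k = finRotate n ^ (k : ℕ) :=
    Equiv.ext fun i => by rw [Perm.coe_pow, ← finCycle_eq_finRotate_iterate]
  rw [h, map_pow, sign_finRotate, pow_mul]

theorem Finset.prod_powersetCard_prod {ι M : Type*} [Fintype ι] [DecidableEq ι] [CommMonoid M]
    (f : ι → M) {a : ℕ} (ha : 0 < a) :
    ∏ I ∈ univ.powersetCard a, ∏ i ∈ I, f i =
      (∏ i, f i) ^ ((Fintype.card ι - 1).choose (a - 1)) := by
  rw [prod_comm' (t' := univ) (s' := fun i => (univ.powersetCard a).filter ({i} ⊆ ·))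
    (by simp), ← prod_pow]
  refine prod_congr rfl fun i _ => ?_
  rw [prod_const, card_filter_powersetCard_subset _ _ _ (subset_univ _)
    (by rw [card_singleton]; exact ha), card_singleton, card_univ]

theorem PowerSeries.coeff_coe_mul_mk {R : Type*} [CommSemiring R] (q : R[X]) (f : ℕ → R)
    (N : ℕ) :
    coeff N ((q : PowerSeries R) * mk f) = ∑ m ∈ range (N + 1), q.coeff m * f (N - m) := by
  rw [coeff_mul, Nat.sum_antidiagonal_eq_sum_range_succ_mk]
  simp only [Polynomial.coeff_coe, coeff_mk]

theorem Polynomial.natDegree_one_sub_C_mul_X_le {R : Type*} [Ring R] (r : R) :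
    (1 - C r * X).natDegree ≤ 1 := by
  compute_degree!

theorem Polynomial.sum_range_coeff_mul_zpow_sub {K : Type*} [Field K] {q : K[X]} {d : ℕ}
    (hd : q.natDegree ≤ d) {r : K} (hr : r ≠ 0) (k : ℤ) :
    ∑ m ∈ range (d + 1), q.coeff m * r ^ (k - m) = r ^ k * q.eval r⁻¹ := by
  rw [eval_eq_sum_range' (Nat.lt_succ_of_le hd), mul_sum]
  refine sum_congr rfl fun m _ => ?_
  rw [sub_eq_add_neg, zpow_add₀ hr, _root_.zpow_neg, zpow_natCast, inv_pow]
  ring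

section Rectangle

variable {K : Type*} [Field K] {n : ℕ}

def rectExp (n a : ℕ) (k : ℤ) (j : Fin n) : ℤ := (if (j : ℕ) < a then k else 0) + (n - 1 - j : ℕ)

/-- The alternant `a_{k^a+δ}` at `u = v`, for any `k ∈ ℤ`. -/
noncomputable def rectAlternant (v : Fin n → K) (a : ℕ) (k : ℤ) : K :=
  det (of fun i j => v i ^ rectExp n a k j)

/-- The polynomial `Q` at `u = v`. -/
noncomputable def rectDenom (v : Fin n → K) (a : ℕ) : K[X] :=
  ∏ I ∈ univ.powersetCard a, (1 - C (∏ i ∈ I, v i) * X)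

variable (v : Fin n → K) (a : ℕ)

theorem rectAlternant_eq_sum (hv : ∀ i, v i ≠ 0) (k : ℤ) :
    rectAlternant v a k = ∑ σ : Perm (Fin n), ((Perm.sign σ : ℤ) : K) *
      (∏ j, v (σ j) ^ (n - 1 - j : ℕ)) *
      (∏ i ∈ (univ.filter fun j : Fin n => (j : ℕ) < a).map σ.toEmbedding, v i) ^ k := by
  rw [rectAlternant, det_apply']
  refine sum_congr rfl fun σ _ => ?_
  have hcol : ∀ j, v (σ j) ^ rectExp n a k j =
      v (σ j) ^ (n - 1 - j : ℕ) * (if (j : ℕ) < a then v (σ j) ^ k else 1) := fun j => by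
    rw [rectExp, zpow_add₀ (hv _), zpow_natCast, mul_comm]
    split_ifs <;> simp
  simp only [of_apply, hcol, prod_mul_distrib, prod_map, ← prod_filter, prod_zpow]
  rw [mul_assoc]
  rfl

theorem rectDenom_natDegree_le : (rectDenom v a).natDegree ≤ n.choose a := by
  refine (natDegree_prod_le _ _).trans
    ((sum_le_sum fun I _ => natDegree_one_sub_C_mul_X_le _).trans ?_)
  rw [sum_const, card_powersetCard, card_univ, Fintype.card_fin, smul_eq_mul, mul_one]

theorem rectDenom_coeff_zero : (rectDenom v a).coeff 0 = 1 := by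
  simp [rectDenom, coeff_zero_prod]

theorem rectDenom_coeff_choose (ha : 0 < a) :
    (rectDenom v a).coeff (n.choose a) =
      (-1) ^ n.choose a * (∏ i, v i) ^ (n - 1).choose (a - 1) := by
  have h := coeff_prod_of_natDegree_le (s := univ.powersetCard a)
    (fun I => 1 - C (∏ i ∈ I, v i) * X) 1 fun I _ => natDegree_one_sub_C_mul_X_le _
  rw [card_powersetCard, card_univ, Fintype.card_fin, mul_one] at h
  rw [rectDenom, h]
  simp only [coeff_sub, coeff_one, coeff_C_mul_X, if_true, one_ne_zero, if_false, zero_sub,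
    prod_neg, card_powersetCard, card_univ, Fintype.card_fin, prod_powersetCard_prod v ha]

theorem rectDenom_eval_inv_eq_zero (hv : ∀ i, v i ≠ 0) {I : Finset (Fin n)}
    (hI : I ∈ univ.powersetCard a) : (rectDenom v a).eval (∏ i ∈ I, v i)⁻¹ = 0 := by
  rw [rectDenom, eval_prod]
  exact prod_eq_zero hI (by simp only [eval_sub, eval_one, eval_mul, eval_C, eval_X,
    mul_inv_cancel₀ (prod_ne_zero_iff.2 fun i _ => hv i), sub_self])

theorem sum_range_coeff_rectDenom_mul_rectAlternant (hv : ∀ i, v i ≠ 0) (han : a ≤ n) (k : ℤ) :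
    ∑ m ∈ range (n.choose a + 1), (rectDenom v a).coeff m * rectAlternant v a (k - m) = 0 := by
  simp_rw [rectAlternant_eq_sum v a hv, mul_sum]
  rw [sum_comm]
  refine sum_eq_zero fun σ _ => ?_
  set I := (univ.filter fun j : Fin n => (j : ℕ) < a).map σ.toEmbedding
  have hI : I ∈ univ.powersetCard a := by
    rw [mem_powersetCard, card_map, Fin.card_filter_val_lt]
    exact ⟨subset_univ _, min_eq_right han⟩
  have hu : ∏ i ∈ I, v i ≠ 0 := prod_ne_zero_iff.2 fun i _ => hv i
  calc ∑ m ∈ range (n.choose a + 1), (rectDenom v a).coeff m *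
        (((Perm.sign σ : ℤ) : K) * (∏ j, v (σ j) ^ (n - 1 - j : ℕ)) * (∏ i ∈ I, v i) ^ (k - m))
      = ((Perm.sign σ : ℤ) : K) * (∏ j, v (σ j) ^ (n - 1 - j : ℕ)) *
          ∑ m ∈ range (n.choose a + 1), (rectDenom v a).coeff m * (∏ i ∈ I, v i) ^ (k - m) := by
        rw [mul_sum]
        exact sum_congr rfl fun m _ => by ring
    _ = 0 := by
      rw [sum_range_coeff_mul_zpow_sub (rectDenom_natDegree_le v a) hu,
        rectDenom_eval_inv_eq_zero v a hv hI, mul_zero, mul_zero]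

theorem rectAlternant_eq_zero (ha : 0 < a) (hlt : a < n) {k : ℤ} (hk₁ : -n < k) (hk₂ : k < 0) :
    rectAlternant v a k = 0 := by
  obtain ⟨j₁, j₂, hne, hexp⟩ :
      ∃ j₁ j₂ : Fin n, j₁ ≠ j₂ ∧ rectExp n a k j₁ = rectExp n a k j₂ := by
    by_cases hka : -a < k
    · refine ⟨⟨(a + k).toNat, by omega⟩, ⟨a, hlt⟩, Fin.ne_of_val_ne (by dsimp only; omega), ?_⟩
      simp only [rectExp]
      split_ifs <;> omega
    · refine ⟨⟨0, by omega⟩, ⟨(-k).toNat, by omega⟩, Fin.ne_of_val_ne (by dsimp only; omega), ?_⟩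
      simp only [rectExp]
      split_ifs <;> omega
  exact det_zero_of_column_eq hne fun i => by simp only [of_apply, hexp]

theorem prod_pow_mul_rectAlternant_neg (hv : ∀ i, v i ≠ 0) (ha : 0 < a) (han : a ≤ n) :
    (∏ i, v i) ^ a * rectAlternant v a (-n) = (-1) ^ (a * (n - a)) * rectAlternant v a 0 := by
  set π := finCycle (⟨n - a, by omega⟩ : Fin n)
  have hπ : ∀ j, (π j : ℕ) = if (j : ℕ) < a then j + (n - a) else j - a := fun j => by
    simp only [π, finCycle_apply, Fin.val_add]
    split_ifs with h
    · exact Nat.mod_eq_of_lt (by omega)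
    · rw [show (j : ℕ) + (n - a) = j - a + n by omega, Nat.add_mod_right,
        Nat.mod_eq_of_lt (by omega)]
  have hrow : of (fun i j => v i ^ a * v i ^ rectExp n a (-n) j) =
      (of fun i j => v i ^ rectExp n a 0 j).submatrix id π := by
    ext i j
    rw [of_apply, submatrix_apply, of_apply, ← zpow_natCast, ← zpow_add₀ (hv i)]
    congr 1
    have hj := j.isLt
    simp only [rectExp, hπ, ite_self, zero_add]
    split_ifs <;> omega
  have hsign : (((Perm.sign π : ℤ) : K)) = (-1) ^ (a * (n - a)) := by
    have hexp : (n - 1) * (n - a) = a * (n - a) + (n - a) * (n - a - 1) := by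
      obtain ⟨b, rfl⟩ := Nat.exists_eq_add_of_le han
      rcases b with _ | b
      · simp
      · simp only [Nat.add_sub_cancel_left, Nat.add_sub_cancel]
        rw [show a + (b + 1) - 1 = a + b by omega]
        ring
    rw [Perm.sign_finCycle, Fin.val_mk, hexp, pow_add, (Nat.even_mul_pred_self _).neg_one_pow,
      mul_one]
    push_cast
    rfl
  rw [rectAlternant, rectAlternant, ← prod_pow, ← det_mul_column]
  simp only [of_apply]
  rw [hrow, det_permute', hsign]

theorem rectAlternant_zero_ne_zero (hv : Function.Injective v) :
    rectAlternant v a 0 ≠ 0 := by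
  have h : of (fun i j => v i ^ rectExp n a 0 j) = (vandermonde v).submatrix id Fin.revPerm := by
    ext i j
    simp only [of_apply, submatrix_apply, id_eq, vandermonde_apply, Fin.revPerm_apply, rectExp,
      ite_self, zero_add, zpow_natCast, Fin.val_rev]
    congr 1
    omega
  rw [rectAlternant, h, det_permute', Ne, mul_eq_zero, not_or]
  refine ⟨?_, det_vandermonde_ne_zero_iff.2 hv⟩
  rcases Int.units_eq_one_or (Perm.sign (Fin.revPerm : Perm (Fin n))) with h | h <;> simp [h]

theorem coeff_rectDenom_mul_mk_rectAlternant (hv : ∀ i, v i ≠ 0) (ha : 0 < a) (han : a ≤ n) :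
    PowerSeries.coeff (n.choose a - n)
        ((rectDenom v a : PowerSeries K) * PowerSeries.mk fun k => rectAlternant v a k) =
      (-1) ^ (n.choose a + a * (n - a) - 1) * (∏ i, v i) ^ ((n - 1).choose (a - 1) - a) *
        rectAlternant v a 0 := by
  rw [PowerSeries.coeff_coe_mul_mk]
  rcases han.eq_or_lt with rfl | hlt
  · simp [Nat.sub_eq_zero_of_le ha, rectDenom_coeff_zero]
  set N := n.choose a - n
  have hnC : n ≤ n.choose a := Nat.le_choose_of_pos_of_lt ha hlt
  have hrec := sum_range_coeff_rectDenom_mul_rectAlternant v a hv hlt.le N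
  have hgap : ∑ m ∈ Ico (N + 1) (n.choose a),
      (rectDenom v a).coeff m * rectAlternant v a (N - m) = 0 :=
    sum_eq_zero fun m hm => by
      rw [mem_Ico] at hm
      rw [rectAlternant_eq_zero v a ha hlt (by omega) (by omega), mul_zero]
  rw [sum_range_succ, ← sum_range_add_sum_Ico _ (show N + 1 ≤ n.choose a by omega), hgap,
    add_zero, show (N : ℤ) - n.choose a = -n by omega] at hrec
  have hsign : (-1 : K) ^ (n.choose a + a * (n - a) - 1) =
      -((-1) ^ n.choose a * (-1) ^ (a * (n - a))) := by
    obtain ⟨e, he⟩ : ∃ e, n.choose a + a * (n - a) = e + 1 :=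
      ⟨_, (Nat.succ_pred (by omega)).symm⟩
    rw [← pow_add, he, Nat.add_sub_cancel, pow_succ, mul_neg_one, neg_neg]
  calc ∑ m ∈ range (N + 1), (rectDenom v a).coeff m * rectAlternant v a ((N - m : ℕ) : ℤ)
      = ∑ m ∈ range (N + 1), (rectDenom v a).coeff m * rectAlternant v a (N - m) :=
        sum_congr rfl fun m hm => by rw [Nat.cast_sub (by simpa [Nat.lt_succ_iff] using hm)]
    _ = -((rectDenom v a).coeff (n.choose a) * rectAlternant v a (-n)) :=
        eq_neg_of_add_eq_zero_left hrec
    _ = _ := by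
      rw [rectDenom_coeff_choose v a ha, ← pow_sub_mul_pow _ (Nat.le_choose_sub_one ha hlt),
        hsign]
      linear_combination (-(-1) ^ n.choose a * (∏ i, v i) ^ ((n - 1).choose (a - 1) - a)) *
        prod_pow_mul_rectAlternant_neg v a hv ha han

end Rectangle

section Transfer
variable {K : Type*} [Field K] {n : ℕ}

theorem coe_rectDenom_comp {R : Type*} [CommRing R] (φ : R →+* K) (u : Fin n → R) (a : ℕ) :
    (rectDenom (fun i => φ (u i)) a : PowerSeries K) =
      PowerSeries.map φ (∏ I ∈ univ.powersetCard a,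
        (1 - PowerSeries.C (∏ i ∈ I, u i) * PowerSeries.X)) := by
  rw [rectDenom, ← Polynomial.coeToPowerSeries.ringHom_apply, map_prod, map_prod]
  refine prod_congr rfl fun I _ => ?_
  simp only [map_sub, map_one, map_mul, Polynomial.coeToPowerSeries.ringHom_apply,
    Polynomial.coe_C, Polynomial.coe_X, PowerSeries.map_C, PowerSeries.map_X, map_prod]

theorem map_alternant {S : Type*} [CommRing S] (φ : MvPolynomial (Fin n) ℚ →+* S)
    (μ : Fin n → ℕ) : φ (alternant n μ) = det (of fun i j => φ (MvPolynomial.X i) ^ μ j) := by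
  rw [alternant, RingHom.map_det]
  congr 1
  ext i j
  simp only [RingHom.mapMatrix_apply, map_apply, of_apply, map_pow]

theorem rectAlternant_natCast (φ : MvPolynomial (Fin n) ℚ →+* K) (a k : ℕ) :
    rectAlternant (fun i => φ (MvPolynomial.X i)) a k =
      φ (alternant n fun j => (if (j : ℕ) < a then k else 0) + (n - 1 - j)) := by
  rw [map_alternant, rectAlternant]
  congr 1
  ext i j
  simp only [of_apply, rectExp, ← zpow_natCast]
  push_cast
  split_ifs <;> rfl

end Transfer

/-- With `s k` the Schur polynomial of the `a × k` rectangle in `n` variables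
(bialternant formula) and `P(z) = Q(z) ∑_k s_{k^a} z^k` where
`Q(z) = ∏_{|I|=a}(1 - z u_I)`, the leading coefficient of `P`, i.e. the coefficient
of `z^{(n choose a) - n}`, is `(-1)^{(n choose a)+a(n-a)-1} (u₁⋯u_n)^{(n-1 choose a-1)-a}`. -/
theorem rect_schur_gf_leading (n a : ℕ) (ha : 1 ≤ a) (han : a ≤ n)
    (s : ℕ → MvPolynomial (Fin n) ℚ)
    (hs : ∀ k : ℕ, s k * alternant n (fun j => n - 1 - (j : ℕ)) =
      alternant n (fun j => (if (j : ℕ) < a then k else 0) + (n - 1 - (j : ℕ)))) :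
    PowerSeries.coeff (R := MvPolynomial (Fin n) ℚ) (n.choose a - n)
        ((∏ I ∈ (Finset.univ : Finset (Fin n)).powersetCard a,
          (1 - PowerSeries.C (R := MvPolynomial (Fin n) ℚ) (∏ i ∈ I, MvPolynomial.X i) *
            PowerSeries.X)) * PowerSeries.mk s) =
      (-1) ^ (n.choose a + a * (n - a) - 1) *
        (∏ i, MvPolynomial.X i) ^ ((n - 1).choose (a - 1) - a) := by
  let φ := algebraMap (MvPolynomial (Fin n) ℚ) (FractionRing (MvPolynomial (Fin n) ℚ))
  have hφ : Function.Injective φ := IsFractionRing.injective _ _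
  let v := fun i => φ (MvPolynomial.X i)
  have hv : Function.Injective v := hφ.comp MvPolynomial.X_injective
  have hΔ : φ (alternant n fun j => n - 1 - j) = rectAlternant v a 0 := by
    simpa using (rectAlternant_natCast φ a 0).symm
  have hmk : PowerSeries.C (rectAlternant v a 0) * PowerSeries.map φ (PowerSeries.mk s) =
      PowerSeries.mk fun k => rectAlternant v a k := by
    ext k
    rw [PowerSeries.coeff_C_mul, PowerSeries.coeff_map, PowerSeries.coeff_mk, PowerSeries.coeff_mk,
      ← hΔ, mul_comm, ← map_mul, hs, rectAlternant_natCast]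
  refine hφ (mul_left_cancel₀ (rectAlternant_zero_ne_zero v a hv) ?_)
  rw [← PowerSeries.coeff_map, map_mul, ← coe_rectDenom_comp, ← PowerSeries.coeff_C_mul,
    mul_left_comm, hmk, coeff_rectDenom_mul_mk_rectAlternant v a
      (fun i => (map_ne_zero_iff φ hφ).2 (MvPolynomial.X_ne_zero i)) ha han]
  simp only [map_mul, map_pow, map_neg, map_one, map_prod]
  ring
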